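/- Let F be a braid system over a unital algebra A, i.e., a collection of bijective linear maps on A⊗A such that for all α,β,γ ∈ F: (α⊗id)(id⊗β)(γ⊗id) = (id⊗γ)(β⊗id)(id⊗α), α(id⊗m) = (m⊗id)(id⊗α)(α⊗id), and α(m⊗id) = (id⊗m)(α⊗id)(id⊗α). Then every α ∈ F satisfies α(1⊗a) = a⊗1 and α(a⊗1) = 1⊗a for all a ∈ A, and the product (m⊗m)(id⊗α⊗id) defines an associative algebra structure on A⊗A with unit 1⊗1. -/
import Mathlib


open TensorProduct LinearMap

noncomputable section

variable (A : Type*) [Ring A] [Algebra ℂ A]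

/-- Two-fold tensor product of `A` with itself. -/
abbrev T2 := A ⊗[ℂ] A
/-- Three-fold tensor product (right associated). -/
abbrev T3 := A ⊗[ℂ] (A ⊗[ℂ] A)
/-- Four-fold tensor product (right associated). -/
abbrev T4 := A ⊗[ℂ] (A ⊗[ℂ] (A ⊗[ℂ] A))

variable {A}

/-- The multiplication of `A` as a linear map. -/
def mA : T2 A →ₗ[ℂ] A := LinearMap.mul' ℂ A

/-- `f ⊗ id` : a map of `T2` acting on the factors 1,2 of `T3`. -/
def op12 (f : T2 A →ₗ[ℂ] T2 A) : T3 A →ₗ[ℂ] T3 A :=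
  (TensorProduct.assoc ℂ A A A).toLinearMap ∘ₗ f.rTensor A ∘ₗ
    (TensorProduct.assoc ℂ A A A).symm.toLinearMap

/-- `id ⊗ f` : a map of `T2` acting on the factors 2,3 of `T3`. -/
def op23 (f : T2 A →ₗ[ℂ] T2 A) : T3 A →ₗ[ℂ] T3 A := f.lTensor A

/-- `f ⊗ id ⊗ id` : a map of `T2` acting on the factors 1,2 of `T4`. -/
def op12_4 (f : T2 A →ₗ[ℂ] T2 A) : T4 A →ₗ[ℂ] T4 A :=
  (TensorProduct.assoc ℂ A A (T2 A)).toLinearMap ∘ₗ f.rTensor (T2 A) ∘ₗ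
    (TensorProduct.assoc ℂ A A (T2 A)).symm.toLinearMap

/-- `id ⊗ f ⊗ id` : a map of `T2` acting on the factors 2,3 of `T4`. -/
def op23_4 (f : T2 A →ₗ[ℂ] T2 A) : T4 A →ₗ[ℂ] T4 A := (op12 f).lTensor A

/-- `id ⊗ id ⊗ f` : a map of `T2` acting on the factors 3,4 of `T4`. -/
def op34_4 (f : T2 A →ₗ[ℂ] T2 A) : T4 A →ₗ[ℂ] T4 A := (f.lTensor A).lTensor A

/-- `m ⊗ id : T3 → T2`. -/
def m12 : T3 A →ₗ[ℂ] T2 A :=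
  (mA (A := A)).rTensor A ∘ₗ (TensorProduct.assoc ℂ A A A).symm.toLinearMap

/-- `id ⊗ m : T3 → T2`. -/
def m23 : T3 A →ₗ[ℂ] T2 A := (mA (A := A)).lTensor A

/-- `m ⊗ m : T4 → T2`. -/
def mm : T4 A →ₗ[ℂ] T2 A := m12 ∘ₗ ((mA (A := A)).lTensor A).lTensor A

/-- A braided quantum group structure on the algebra `A` (Đurđević).
`φ` is the coproduct, `ε` the counit, `κ` the antipode, `σ` the braiding
(with given inverse `σ'`). -/
structure BQG (A : Type*) [Ring A] [Algebra ℂ A] where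
  φ : A →ₗ[ℂ] T2 A
  ε : A →ₗ[ℂ] ℂ
  κ : A →ₗ[ℂ] A
  σ : T2 A →ₗ[ℂ] T2 A
  σ' : T2 A →ₗ[ℂ] T2 A
  σ_comp : σ ∘ₗ σ' = LinearMap.id
  comp_σ : σ' ∘ₗ σ = LinearMap.id
  κ_bij : Function.Bijective κ
  /-- coassociativity `(φ⊗id)φ = (id⊗φ)φ` -/
  coassoc : (TensorProduct.assoc ℂ A A A).toLinearMap ∘ₗ φ.rTensor A ∘ₗ φ = φ.lTensor A ∘ₗ φ
  /-- `(ε⊗id)φ = id` -/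
  counit_left : (TensorProduct.lid ℂ A).toLinearMap ∘ₗ ε.rTensor A ∘ₗ φ = LinearMap.id
  /-- `(id⊗ε)φ = id` -/
  counit_right : (TensorProduct.rid ℂ A).toLinearMap ∘ₗ ε.lTensor A ∘ₗ φ = LinearMap.id
  /-- `σ(m⊗id) = (id⊗m)(σ⊗id)(id⊗σ)` -/
  braid_mul_left : σ ∘ₗ m12 = m23 ∘ₗ op12 σ ∘ₗ op23 σ
  /-- `σ(id⊗m) = (m⊗id)(id⊗σ)(σ⊗id)` -/
  braid_mul_right : σ ∘ₗ m23 = m12 ∘ₗ op23 σ ∘ₗ op12 σ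
  /-- `φm = (m⊗m)(id⊗σ⊗id)(φ⊗φ)` -/
  comul_mul : φ ∘ₗ mA = mm ∘ₗ op23_4 σ ∘ₗ
      (TensorProduct.assoc ℂ A A (T2 A)).toLinearMap ∘ₗ φ.rTensor (T2 A) ∘ₗ φ.lTensor A
  /-- `(σ⊗id²)(id⊗φ⊗id)(σ⁻¹⊗id)(id⊗φ) = (id²⊗σ)(id⊗φ⊗id)(id⊗σ⁻¹)(φ⊗id)` -/
  mixed_coassoc :
    op12_4 σ ∘ₗ ((TensorProduct.assoc ℂ A A A).toLinearMap ∘ₗ φ.rTensor A).lTensor A ∘ₗ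
        op12 σ' ∘ₗ φ.lTensor A
      = op34_4 σ ∘ₗ ((TensorProduct.assoc ℂ A A A).toLinearMap ∘ₗ φ.rTensor A).lTensor A ∘ₗ
        op23 σ' ∘ₗ (TensorProduct.assoc ℂ A A A).toLinearMap ∘ₗ φ.rTensor A
  /-- `m(κ⊗id)φ = 1ε` -/
  antipode_left : mA ∘ₗ κ.rTensor A ∘ₗ φ = Algebra.linearMap ℂ A ∘ₗ ε
  /-- `m(id⊗κ)φ = 1ε` -/
  antipode_right : mA ∘ₗ κ.lTensor A ∘ₗ φ = Algebra.linearMap ℂ A ∘ₗ ε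

namespace BQG

variable {A : Type*} [Ring A] [Algebra ℂ A] (G : BQG A)

/-- `φ ⊗ id : T2 → T3`. -/
def φ1 : T2 A →ₗ[ℂ] T3 A := (TensorProduct.assoc ℂ A A A).toLinearMap ∘ₗ G.φ.rTensor A

/-- `id ⊗ φ : T2 → T3`. -/
def φ2 : T2 A →ₗ[ℂ] T3 A := G.φ.lTensor A

/-- `id² ⊗ ε : T3 → T2`. -/
def ε3r : T3 A →ₗ[ℂ] T2 A :=
  ((TensorProduct.rid ℂ A).toLinearMap ∘ₗ G.ε.lTensor A).lTensor A

/-- `ε ⊗ id² : T3 → T2`. -/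
def ε3l : T3 A →ₗ[ℂ] T2 A :=
  (TensorProduct.lid ℂ (T2 A)).toLinearMap ∘ₗ G.ε.rTensor (T2 A)

/-- The secondary braiding `τ = (id²⊗ε)(id⊗σ⁻¹)(φ⊗id)σ`. -/
def τ : T2 A →ₗ[ℂ] T2 A := G.ε3r ∘ₗ op23 G.σ' ∘ₗ G.φ1 ∘ₗ G.σ

/-- `ε ⊗ ε : T2 → ℂ`. -/
def εε : T2 A →ₗ[ℂ] ℂ :=
  (TensorProduct.lid ℂ ℂ).toLinearMap ∘ₗ G.ε.rTensor ℂ ∘ₗ G.ε.lTensor A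

end BQG


section BraidHelpers

set_option synthInstance.maxHeartbeats 1000000
set_option maxHeartbeats 1000000

variable {A : Type*} [Ring A] [Algebra ℂ A]

@[simp] lemma mA_tmul (x y : A) : mA (x ⊗ₜ[ℂ] y) = x * y := rfl

@[simp] lemma op12_tmul (f : T2 A →ₗ[ℂ] T2 A) (x y z : A) :
    op12 f (x ⊗ₜ[ℂ] (y ⊗ₜ[ℂ] z)) =
      (TensorProduct.assoc ℂ A A A) (f (x ⊗ₜ[ℂ] y) ⊗ₜ[ℂ] z) := by
  simp [op12]

@[simp] lemma op23_tmul (f : T2 A →ₗ[ℂ] T2 A) (x : A) (w : T2 A) :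
    op23 f (x ⊗ₜ[ℂ] w) = x ⊗ₜ[ℂ] f w := rfl

@[simp] lemma m12_tmul (x y z : A) :
    m12 (x ⊗ₜ[ℂ] (y ⊗ₜ[ℂ] z)) = (x * y) ⊗ₜ[ℂ] z := by
  simp [m12]

@[simp] lemma m23_tmul (x : A) (w : T2 A) :
    m23 (x ⊗ₜ[ℂ] w) = x ⊗ₜ[ℂ] mA w := rfl

@[simp] lemma mm_tmul (a x y d : A) :
    mm (a ⊗ₜ[ℂ] (x ⊗ₜ[ℂ] (y ⊗ₜ[ℂ] d))) = (a * x) ⊗ₜ[ℂ] (y * d) := by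
  simp [mm]

@[simp] lemma op23_4_tmul (f : T2 A →ₗ[ℂ] T2 A) (a : A) (w : T3 A) :
    op23_4 f (a ⊗ₜ[ℂ] w) = a ⊗ₜ[ℂ] op12 f w := rfl

lemma m12_one (z : T2 A) : m12 ((1 : A) ⊗ₜ[ℂ] z) = z := by
  induction z using TensorProduct.induction_on with
  | zero => simp
  | tmul x y => simp
  | add u v hu hv => simp only [tmul_add, map_add, hu, hv]

lemma m23_assoc_one (z : T2 A) :
    m23 ((TensorProduct.assoc ℂ A A A) (z ⊗ₜ[ℂ] (1 : A))) = z := by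
  induction z using TensorProduct.induction_on with
  | zero => simp
  | tmul x y => simp
  | add u v hu hv => simp only [add_tmul, map_add, hu, hv]

lemma map_mulLeft_absorb (a x f0 : A) (w : T2 A) :
    TensorProduct.map (mulLeft ℂ (a * x)) (mulRight ℂ f0) w =
      TensorProduct.map (mulLeft ℂ a) (mulRight ℂ f0) (m12 (x ⊗ₜ[ℂ] w)) := by
  induction w using TensorProduct.induction_on with
  | zero => simp
  | tmul u v => simp [mul_assoc]
  | add u v hu hv => simp only [tmul_add, map_add, hu, hv]

lemma map_mulRight_absorb (a q f0 : A) (w : T2 A) :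
    TensorProduct.map (mulLeft ℂ a) (mulRight ℂ (q * f0)) w =
      TensorProduct.map (mulLeft ℂ a) (mulRight ℂ f0)
        (m23 ((TensorProduct.assoc ℂ A A A) (w ⊗ₜ[ℂ] q))) := by
  induction w using TensorProduct.induction_on with
  | zero => simp
  | tmul u v => simp [mul_assoc]
  | add u v hu hv => simp only [add_tmul, map_add, hu, hv]

lemma m12_m23_swap (x q : A) (r : T2 A) :
    m12 (x ⊗ₜ[ℂ] (m23 ((TensorProduct.assoc ℂ A A A) (r ⊗ₜ[ℂ] q)))) =
      m23 ((TensorProduct.assoc ℂ A A A) ((m12 (x ⊗ₜ[ℂ] r)) ⊗ₜ[ℂ] q)) := by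
  induction r using TensorProduct.induction_on with
  | zero => simp
  | tmul u v => simp
  | add u v hu hv =>
      simp only [add_tmul, tmul_add, map_add, hu, hv]

lemma Pform (α : T2 A →ₗ[ℂ] T2 A) (a b c d : A) :
    (mm ∘ₗ op23_4 α ∘ₗ (TensorProduct.assoc ℂ A A (T2 A)).toLinearMap)
        ((a ⊗ₜ[ℂ] b) ⊗ₜ[ℂ] (c ⊗ₜ[ℂ] d)) =
      TensorProduct.map (mulLeft ℂ a) (mulRight ℂ d) (α (b ⊗ₜ[ℂ] c)) := by
  simp only [LinearMap.comp_apply, LinearEquiv.coe_coe, TensorProduct.assoc_tmul,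
    op23_4_tmul, op12_tmul]
  generalize α (b ⊗ₜ[ℂ] c) = s
  induction s using TensorProduct.induction_on with
  | zero => simp
  | tmul x y => simp
  | add u v hu hv => simp only [add_tmul, tmul_add, map_add, hu, hv]

/-- Auxiliary bilinear expression for the left-bracketed product. -/
def B1 (α : T2 A →ₗ[ℂ] T2 A) (a f0 : A) : (T2 A) ⊗[ℂ] (T2 A) →ₗ[ℂ] T2 A :=
  TensorProduct.map (mulLeft ℂ a) (mulRight ℂ f0) ∘ₗ m12 ∘ₗ
    LinearMap.lTensor A (m23 ∘ₗ (TensorProduct.assoc ℂ A A A).toLinearMap ∘ₗ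
      LinearMap.rTensor A α) ∘ₗ
    LinearMap.lTensor A (TensorProduct.assoc ℂ A A A).symm.toLinearMap ∘ₗ
    (TensorProduct.assoc ℂ A A (T2 A)).toLinearMap

/-- Auxiliary bilinear expression for the right-bracketed product. -/
def B2 (α : T2 A →ₗ[ℂ] T2 A) (a f0 : A) : (T2 A) ⊗[ℂ] (T2 A) →ₗ[ℂ] T2 A :=
  TensorProduct.map (mulLeft ℂ a) (mulRight ℂ f0) ∘ₗ m23 ∘ₗ
    (TensorProduct.assoc ℂ A A A).toLinearMap ∘ₗ
    LinearMap.rTensor A (m12 ∘ₗ op23 α ∘ₗ (TensorProduct.assoc ℂ A A A).toLinearMap) ∘ₗ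
    (TensorProduct.assoc ℂ (T2 A) A A).symm.toLinearMap

lemma B1_tmul (α : T2 A →ₗ[ℂ] T2 A) (a f0 x y : A) (t : T2 A) :
    B1 α a f0 ((x ⊗ₜ[ℂ] y) ⊗ₜ[ℂ] t) =
      TensorProduct.map (mulLeft ℂ a) (mulRight ℂ f0)
        (m12 (x ⊗ₜ[ℂ] (m23 (op12 α (y ⊗ₜ[ℂ] t))))) := by
  simp [B1, op12]

lemma B2_tmul (α : T2 A →ₗ[ℂ] T2 A) (a f0 p q : A) (s : T2 A) :
    B2 α a f0 (s ⊗ₜ[ℂ] (p ⊗ₜ[ℂ] q)) =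
      TensorProduct.map (mulLeft ℂ a) (mulRight ℂ f0)
        (m23 ((TensorProduct.assoc ℂ A A A)
          ((m12 (op23 α ((TensorProduct.assoc ℂ A A A) (s ⊗ₜ[ℂ] p)))) ⊗ₜ[ℂ] q))) := by
  simp [B2]

lemma B1_eq_B2 (α : T2 A →ₗ[ℂ] T2 A) (a f0 : A) : B1 α a f0 = B2 α a f0 := by
  ext x y p q
  simp only [TensorProduct.AlgebraTensorModule.curry_apply, TensorProduct.curry_apply,
    LinearMap.coe_restrictScalars, B1_tmul, B2_tmul, op12_tmul,
    LinearEquiv.coe_coe, TensorProduct.assoc_tmul, op23_tmul]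
  rw [m12_m23_swap]

end BraidHelpers

/-- Properties of a braid system over a unital algebra: every member fixes the unit
in the braided sense, and induces an associative unital algebra structure on `A ⊗ A`
via the product `(m⊗m)(id⊗α⊗id)`. -/
theorem braid_system_properties {A : Type*} [Ring A] [Algebra ℂ A]
    (F : Set (T2 A →ₗ[ℂ] T2 A))
    (hbij : ∀ α ∈ F, Function.Bijective α)
    (hbraid : ∀ α ∈ F, ∀ β ∈ F, ∀ γ ∈ F,
      op12 α ∘ₗ op23 β ∘ₗ op12 γ = op23 γ ∘ₗ op12 β ∘ₗ op23 α)
    (hmul_r : ∀ α ∈ F, α ∘ₗ m23 = m12 ∘ₗ op23 α ∘ₗ op12 α)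
    (hmul_l : ∀ α ∈ F, α ∘ₗ m12 = m23 ∘ₗ op12 α ∘ₗ op23 α) :
    ∀ α ∈ F,
      (∀ a : A, α ((1 : A) ⊗ₜ[ℂ] a) = a ⊗ₜ[ℂ] (1 : A)) ∧
      (∀ a : A, α (a ⊗ₜ[ℂ] (1 : A)) = (1 : A) ⊗ₜ[ℂ] a) ∧
      (∀ P : (T2 A) ⊗[ℂ] (T2 A) →ₗ[ℂ] T2 A,
        P = mm ∘ₗ op23_4 α ∘ₗ (TensorProduct.assoc ℂ A A (T2 A)).toLinearMap →
          P ∘ₗ P.rTensor (T2 A)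
              = P ∘ₗ P.lTensor (T2 A) ∘ₗ
                (TensorProduct.assoc ℂ (T2 A) (T2 A) (T2 A)).toLinearMap ∧
            (∀ x : T2 A, P (((1 : A) ⊗ₜ[ℂ] (1 : A)) ⊗ₜ[ℂ] x) = x) ∧
            (∀ x : T2 A, P (x ⊗ₜ[ℂ] ((1 : A) ⊗ₜ[ℂ] (1 : A))) = x)) := by
  intro α hα
  have hsurj := (hbij α hα).2
  have hl := hmul_l α hα
  have hr := hmul_r α hα
  have hl_elt : ∀ y d e : A, α ((y * d) ⊗ₜ[ℂ] e) =
      m23 (op12 α (y ⊗ₜ[ℂ] α (d ⊗ₜ[ℂ] e))) := by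
    intro y d e
    have h := LinearMap.congr_fun hl (y ⊗ₜ[ℂ] (d ⊗ₜ[ℂ] e))
    set_option synthInstance.maxHeartbeats 1000000 in simpa using h
  have hr_elt : ∀ b c p : A, α (b ⊗ₜ[ℂ] (c * p)) =
      m12 (op23 α ((TensorProduct.assoc ℂ A A A) (α (b ⊗ₜ[ℂ] c) ⊗ₜ[ℂ] p))) := by
    intro b c p
    have h := LinearMap.congr_fun hr (b ⊗ₜ[ℂ] (c ⊗ₜ[ℂ] p))
    set_option synthInstance.maxHeartbeats 1000000 in simpa using h
  have k1 : ∀ z : T2 A, m23 (op12 α ((1 : A) ⊗ₜ[ℂ] z)) = z := by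
    intro z
    obtain ⟨w, rfl⟩ := hsurj z
    induction w using TensorProduct.induction_on with
    | zero => set_option synthInstance.maxHeartbeats 1000000 in simp
    | tmul a b => set_option synthInstance.maxHeartbeats 1000000 in simpa using (hl_elt 1 a b).symm
    | add u v hu hv => simp only [map_add, tmul_add, hu, hv]
  have k2 : ∀ z : T2 A,
      m12 (op23 α ((TensorProduct.assoc ℂ A A A) (z ⊗ₜ[ℂ] (1 : A)))) = z := by
    intro z
    obtain ⟨w, rfl⟩ := hsurj z
    induction w using TensorProduct.induction_on with
    | zero => set_option synthInstance.maxHeartbeats 1000000 in simp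
    | tmul a b => set_option synthInstance.maxHeartbeats 1000000 in simpa using (hr_elt a b 1).symm
    | add u v hu hv => simp only [map_add, add_tmul, hu, hv]
  have unit1 : ∀ a : A, α ((1 : A) ⊗ₜ[ℂ] a) = a ⊗ₜ[ℂ] (1 : A) := by
    intro a
    have h := k1 (a ⊗ₜ[ℂ] (1 : A))
    rwa [op12_tmul, m23_assoc_one] at h
  have unit2 : ∀ a : A, α (a ⊗ₜ[ℂ] (1 : A)) = (1 : A) ⊗ₜ[ℂ] a := by
    intro a
    have h := k2 ((1 : A) ⊗ₜ[ℂ] a)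
    rwa [TensorProduct.assoc_tmul, op23_tmul, m12_one] at h
  refine ⟨unit1, unit2, ?_⟩
  rintro P rfl
  have Papp : ∀ a b c d : A,
      (mm ∘ₗ op23_4 α ∘ₗ (TensorProduct.assoc ℂ A A (T2 A)).toLinearMap)
          ((a ⊗ₜ[ℂ] b) ⊗ₜ[ℂ] (c ⊗ₜ[ℂ] d)) =
        TensorProduct.map (mulLeft ℂ a) (mulRight ℂ d) (α (b ⊗ₜ[ℂ] c)) :=
    fun a b c d => Pform α a b c d
  set Q := mm ∘ₗ op23_4 α ∘ₗ (TensorProduct.assoc ℂ A A (T2 A)).toLinearMap with hQ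
  refine ⟨?_, ?_, ?_⟩
  · -- associativity
    have stepA : ∀ (a d e f0 : A) (s : T2 A),
        Q ((TensorProduct.map (mulLeft ℂ a) (mulRight ℂ d) s) ⊗ₜ[ℂ] (e ⊗ₜ[ℂ] f0)) =
          B1 α a f0 (s ⊗ₜ[ℂ] α (d ⊗ₜ[ℂ] e)) := by
      intro a d e f0 s
      induction s using TensorProduct.induction_on with
      | zero => set_option synthInstance.maxHeartbeats 1000000 in simp
      | tmul x y =>
          rw [TensorProduct.map_tmul, mulLeft_apply, mulRight_apply, Papp,
            hl_elt y d e, B1_tmul]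
          exact map_mulLeft_absorb a x f0 _
      | add u v hu hv => simp only [map_add, add_tmul, tmul_add, hu, hv]
    have stepB : ∀ (a b c f0 : A) (t : T2 A),
        Q ((a ⊗ₜ[ℂ] b) ⊗ₜ[ℂ] (TensorProduct.map (mulLeft ℂ c) (mulRight ℂ f0) t)) =
          B2 α a f0 (α (b ⊗ₜ[ℂ] c) ⊗ₜ[ℂ] t) := by
      intro a b c f0 t
      induction t using TensorProduct.induction_on with
      | zero => set_option synthInstance.maxHeartbeats 1000000 in simp
      | tmul p q =>
          rw [TensorProduct.map_tmul, mulLeft_apply, mulRight_apply, Papp,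
            hr_elt b c p, B2_tmul]
          exact map_mulRight_absorb a q f0 _
      | add u v hu hv => simp only [map_add, add_tmul, tmul_add, hu, hv]
    ext a b c d e f0
    simp only [TensorProduct.AlgebraTensorModule.curry_apply, TensorProduct.curry_apply,
      LinearMap.coe_restrictScalars, LinearMap.comp_apply, LinearEquiv.coe_coe,
      LinearMap.rTensor_tmul, LinearMap.lTensor_tmul, TensorProduct.assoc_tmul]
    rw [Papp, Papp, stepA, stepB, B1_eq_B2]
  · -- left unit
    intro x
    induction x using TensorProduct.induction_on with
    | zero => set_option synthInstance.maxHeartbeats 1000000 in simp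
    | tmul c d =>
        rw [Papp, unit1 c]
        set_option synthInstance.maxHeartbeats 1000000 in simp
    | add u v hu hv => simp only [tmul_add, map_add, hu, hv]
  · -- right unit
    intro x
    induction x using TensorProduct.induction_on with
    | zero => set_option synthInstance.maxHeartbeats 1000000 in simp
    | tmul a b =>
        rw [Papp, unit2 b]
        set_option synthInstance.maxHeartbeats 1000000 in simp
    | add u v hu hv => simp only [add_tmul, map_add, hu, hv]
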